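/- arXiv:math/9308217 — 10 statements merged into one kernel-verified Lean document; each statement's English description precedes it below -/
import Mathlib

section
/- Let T be a topology on Ω and μ an infinite cardinal. Call a subset X ⊆ Ω small if the family {X ∩ U : U ∈ T} has cardinality ≤ μ. Then the family I of small sets is a μ⁺-complete ideal on Ω containing all singletons: it is downward closed, and the union of at most μ small sets is small, provided that every subset of Ω of cardinality ≤ μ is small. -/
/-! A family of at most `μ` sets is told apart by a set `Z` of at most `μ` points: pick a point
in the symmetric difference of each pair of distinct members. Applied to all traces of the
`≤ μ` small sets `X i` at once, `Z ∩ U` determines every `X i ∩ U`, hence `(⋃ i, X i) ∩ U`;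
so the union has no more traces than `Z`, which is small because `#Z ≤ μ`. -/

open Cardinal

/-- `X` is small (for the family `T` of open sets and cardinal `μ`) if
`{X ∩ U : U ∈ T}` has cardinality at most `μ`. -/
def IsSmall {Ω : Type u} (T : Set (Set Ω)) (μ : Cardinal.{u}) (X : Set Ω) : Prop :=
  #{V : Set Ω // ∃ U ∈ T, V = X ∩ U} ≤ μ

theorem Set.exists_mk_le_injOn_inter {Ω : Type u} {μ : Cardinal.{u}} (hμ : ℵ₀ ≤ μ)
    {S : Set (Set Ω)} (hS : #S ≤ μ) :
    ∃ Z : Set Ω, #Z ≤ μ ∧ S.InjOn (Z ∩ ·) := by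
  let point : {p : S × S // p.1 ≠ p.2} → Ω := fun p =>
    (Set.symmDiff_nonempty.2 (Subtype.coe_injective.ne p.2)).some
  refine ⟨Set.range point, ?_, fun s hs t ht hZ => ?_⟩
  · calc #(Set.range point) ≤ #{p : S × S // p.1 ≠ p.2} := mk_range_le
      _ ≤ #(S × S) := mk_subtype_le _
      _ = #S * #S := by simp
      _ ≤ μ * μ := mul_le_mul' hS hS
      _ = μ := mul_eq_self hμ
  · by_contra hst
    set p : {p : S × S // p.1 ≠ p.2} := ⟨(⟨s, hs⟩, ⟨t, ht⟩), fun h => hst (congrArg Subtype.val h)⟩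
    have hp : point p ∈ symmDiff s t := Set.Nonempty.some_mem _
    have hs_iff_ht : point p ∈ s ↔ point p ∈ t := by
      simpa using congrArg (point p ∈ ·) hZ
    rcases hp with ⟨h, h'⟩ | ⟨h, h'⟩
    · exact h' (hs_iff_ht.1 h)
    · exact h' (hs_iff_ht.2 h)

section Traces

variable {Ω : Type u} {T : Set (Set Ω)} {μ : Cardinal.{u}}

/-- `IsSmall T μ X` is definitionally `#(traces T X) ≤ μ`. -/
def traces (T : Set (Set Ω)) (X : Set Ω) : Set (Set Ω) :=
  {V | ∃ U ∈ T, V = X ∩ U}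

theorem mk_traces_le_of_inter_eq_imp {X Z : Set Ω}
    (h : ∀ U ∈ T, ∀ U' ∈ T, Z ∩ U = Z ∩ U' → X ∩ U = X ∩ U') :
    #(traces T X) ≤ #(traces T Z) := by
  let restrict : traces T Z → traces T X := fun W =>
    ⟨X ∩ W.2.choose, W.2.choose, W.2.choose_spec.1, rfl⟩
  refine mk_le_of_surjective (f := restrict) ?_
  rintro ⟨_, U, hU, rfl⟩
  let W : traces T Z := ⟨Z ∩ U, U, hU, rfl⟩
  exact ⟨W, Subtype.ext (h _ W.2.choose_spec.1 _ hU W.2.choose_spec.2.symm)⟩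

theorem IsSmall.mono {X Y : Set Ω} (hYX : Y ⊆ X) (hX : IsSmall T μ X) : IsSmall T μ Y := by
  refine le_trans (mk_traces_le_of_inter_eq_imp fun U _ U' _ hXU => ?_) hX
  rw [← Set.inter_eq_self_of_subset_left hYX, Set.inter_assoc, hXU, ← Set.inter_assoc]

theorem IsSmall.iUnion (hμ : ℵ₀ ≤ μ) (hsmall : ∀ Z : Set Ω, #Z ≤ μ → IsSmall T μ Z)
    {ι : Type u} {X : ι → Set Ω} (hι : #ι ≤ μ) (hX : ∀ i, IsSmall T μ (X i)) :
    IsSmall T μ (⋃ i, X i) := by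
  have hS : #(⋃ i, traces T (X i)) ≤ μ :=
    calc #(⋃ i, traces T (X i)) ≤ #ι * ⨆ i, #(traces T (X i)) := mk_iUnion_le _
      _ ≤ μ * μ := mul_le_mul' hι (ciSup_le' hX)
      _ = μ := mul_eq_self hμ
  obtain ⟨Z, hZμ, hZ⟩ := Set.exists_mk_le_injOn_inter hμ hS
  refine le_trans (mk_traces_le_of_inter_eq_imp fun U hU U' hU' hZU => ?_) (hsmall Z hZμ)
  simp only [Set.iUnion_inter]
  refine Set.iUnion_congr fun i => hZ (Set.mem_iUnion.2 ⟨i, U, hU, rfl⟩)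
    (Set.mem_iUnion.2 ⟨i, U', hU', rfl⟩) ?_
  simp only [Set.inter_left_comm Z, hZU]

end Traces

/-- the family of small sets is a `μ⁺`-complete ideal on `Ω`
containing all singletons: it contains singletons, is downward closed, and is
closed under unions of at most `μ` members, given that every subset of `Ω` of
cardinality `≤ μ` is small. -/
theorem stmt_2 {Ω : Type u} (T : Set (Set Ω)) (μ : Cardinal.{u}) (hμ : ℵ₀ ≤ μ)
    (hsmall : ∀ Z : Set Ω, #Z ≤ μ → IsSmall T μ Z) :
    (∀ x : Ω, IsSmall T μ {x}) ∧
    (∀ X Y : Set Ω, Y ⊆ X → IsSmall T μ X → IsSmall T μ Y) ∧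
    (∀ (ι : Type u) (X : ι → Set Ω), #ι ≤ μ → (∀ i, IsSmall T μ (X i)) →
      IsSmall T μ (⋃ i, X i)) :=
  ⟨fun _ => hsmall _ (by simpa using one_le_aleph0.trans hμ), fun _ _ hYX hX => hX.mono hYX,
    fun _ _ hι hX => IsSmall.iUnion hμ hsmall hι hX⟩
end

section
/- Let T be a topology on Ω, μ an infinite cardinal, and suppose every subset of Ω of cardinality ≤ μ is small (i.e. {Z ∩ U : U ∈ T} has size ≤ μ). If |T| > μ then |Ω| > μ, and moreover there exist T' ⊆ T and Ω' ⊆ Ω, both of cardinality μ⁺, such that distinct members of T' have distinct traces on Ω'. -/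
open Cardinal

/-!
If `Ω` had at most `μ` points, `Ω` itself would be small, and since `U ∩ Ω = U` this would leave
`T` with at most `μ` members. Now take any `μ⁺` open sets; choosing one point distinguishing each
pair of them gives at most `μ⁺ · μ⁺ = μ⁺` points on which all their traces are distinct, and
padding this set with further points (there are more than `μ` of them) brings it to cardinality
exactly `μ⁺`.
-/

universe u

variable {α : Type u}

theorem Cardinal.mk_le_mk_traces_univ (T : Set (Set α)) :
    #T ≤ #{V : Set α // ∃ U ∈ T, V = Set.univ ∩ U} :=
  mk_le_of_injective (f := fun U : T => ⟨U.1, U.1, U.2, (Set.univ_inter _).symm⟩)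
    fun _ _ h => Subtype.ext (Subtype.mk.inj h)

theorem Set.InjOn.inter_mono {F : Set (Set α)} {S S' : Set α}
    (hS : F.InjOn (· ∩ S)) (hSS' : S ⊆ S') : F.InjOn (· ∩ S') := by
  intro U hU V hV h
  apply hS hU hV
  simp only at h ⊢
  rw [← Set.inter_eq_right.2 hSS', ← Set.inter_assoc, h, Set.inter_assoc]

theorem Set.exists_injOn_inter_mk_le (F : Set (Set α)) :
    ∃ S : Set α, #S ≤ #F * #F ∧ F.InjOn (· ∩ S) := by
  have hsep : ∀ U V : Set α, U ≠ V → ∃ x, ¬(x ∈ U ↔ x ∈ V) := fun U V h => by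
    by_contra! hc
    exact h (Set.ext hc)
  choose sep hsep using hsep
  let D := {p : F × F // p.1.1 ≠ p.2.1}
  refine ⟨Set.range fun p : D => sep p.1.1 p.1.2 p.2, ?_, ?_⟩
  · calc _ ≤ #D := mk_range_le
      _ ≤ #(F × F) := mk_subtype_le _
      _ = #F * #F := by rw [mk_prod, lift_id]
  · intro U hU V hV h
    by_contra hUV
    apply hsep U V hUV
    have hmem : sep U V hUV ∈ Set.range fun p : D => sep p.1.1 p.1.2 p.2 :=
      ⟨⟨(⟨U, hU⟩, ⟨V, hV⟩), hUV⟩, rfl⟩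
    simpa [hmem] using Set.ext_iff.1 h (sep U V hUV)

theorem Cardinal.exists_superset_mk_eq {s : Set α} {κ : Cardinal.{u}} (hκ : ℵ₀ ≤ κ)
    (hs : #s ≤ κ) (hα : κ ≤ #α) : ∃ t : Set α, s ⊆ t ∧ #t = κ := by
  obtain ⟨p, hp⟩ := le_mk_iff_exists_set.1 hα
  refine ⟨s ∪ p, Set.subset_union_left, le_antisymm ?_ ?_⟩
  · calc #(s ∪ p : Set α) ≤ #s + #p := mk_union_le s p
      _ ≤ κ + κ := by rw [hp]; exact add_le_add_left hs κ
      _ = κ := add_eq_self hκ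
  · exact hp ▸ mk_le_mk_of_subset Set.subset_union_right

/-- if every subset of `Ω` of cardinality `≤ μ` is small and
`|T| > μ`, then `|Ω| > μ` and there are `T' ⊆ T` and `Ω' ⊆ Ω`, both of
cardinality `μ⁺`, such that distinct members of `T'` have distinct traces
on `Ω'`. -/
theorem stmt_3 {Ω : Type u} (T : Set (Set Ω)) (μ : Cardinal.{u}) (hμ : ℵ₀ ≤ μ)
    (hsmall : ∀ Z : Set Ω, #Z ≤ μ → #{V : Set Ω // ∃ U ∈ T, V = Z ∩ U} ≤ μ)
    (hT : μ < #T) :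
    μ < #Ω ∧
    ∃ T' : Set (Set Ω), T' ⊆ T ∧ #T' = Order.succ μ ∧
      ∃ Ω' : Set Ω, #Ω' = Order.succ μ ∧
        ∀ U ∈ T', ∀ V ∈ T', U ≠ V → U ∩ Ω' ≠ V ∩ Ω' := by
  have hΩ : μ < #Ω := by
    by_contra! h
    exact hT.not_ge <| (mk_le_mk_traces_univ T).trans (hsmall _ (by rwa [mk_univ]))
  have hsucc : ℵ₀ ≤ Order.succ μ := hμ.trans (Order.le_succ μ)
  obtain ⟨T', hT'T, hT'⟩ := le_mk_iff_exists_subset.1 (Order.succ_le_of_lt hT)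
  obtain ⟨S, hS, hinj⟩ := T'.exists_injOn_inter_mk_le
  rw [hT', mul_eq_self hsucc] at hS
  obtain ⟨Ω', hSΩ', hΩ'⟩ := exists_superset_mk_eq hsucc hS (Order.succ_le_of_lt hΩ)
  exact ⟨hΩ, T', hT'T, hT', Ω', hΩ', fun U hU V hV hUV h => hUV (hinj.inter_mono hSΩ' hU hV h)⟩
end

section
/- In a linear order I with interval rank rk_I as defined, if rk_I(x,y) = ∞ (i.e., rk_I(x,y) is not equal to any ordinal), then the interval (x,y)_I has at least λ^{ℵ₀} Dedekind cuts, where λ is a strong limit cardinal of cofinality ℵ₀ written as the supremum of an increasing sequence of regular cardinals λ_n. -/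
/-!
If `(x, y)` has no rank, then, since the ranks that do occur are bounded by some ordinal `c`,
the clause of the rank recursion at `c` fails for `(x, y)`: there are `λ` pairwise disjoint
subintervals, none of rank `< c`, hence none of any rank. Iterating this splitting along every
branch `σ : ℕ → λ` gives nested intervals whose left endpoints generate a lower set of `(x, y)`;
two branches first differ at disjoint children, so distinct branches give distinct lower sets,
and there are `λ ^ ℵ₀` branches.
-/

open Cardinal Set Function

universe u

structure IntervalSplitting (α ι β : Type*) [LinearOrder α] where
  lo : β → α
  hi : β → α
  child : β → ι → β
  lo_lt_lo_child : ∀ p i, lo p < lo (child p i)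
  lo_child_lt_hi_child : ∀ p i, lo (child p i) < hi (child p i)
  hi_child_lt_hi : ∀ p i, hi (child p i) < hi p
  disjoint_child : ∀ p, Pairwise (Disjoint on fun i => Ioo (lo (child p i)) (hi (child p i)))

namespace IntervalSplitting

variable {α ι β : Type*} [LinearOrder α] (S : IntervalSplitting α ι β)

theorem lo_child_mem_Ioo (p : β) (i : ι) : S.lo (S.child p i) ∈ Ioo (S.lo p) (S.hi p) :=
  ⟨S.lo_lt_lo_child p i, (S.lo_child_lt_hi_child p i).trans (S.hi_child_lt_hi p i)⟩

theorem lo_lt_hi (p : β) (i : ι) : S.lo p < S.hi p :=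
  (S.lo_child_mem_Ioo p i).1.trans (S.lo_child_mem_Ioo p i).2

def branch (r : β) (σ : ℕ → ι) : ℕ → β
  | 0 => r
  | n + 1 => S.child (branch r σ n) (σ n)

theorem branch_eq_of_forall_lt_eq {r : β} {σ τ : ℕ → ι} {n : ℕ} (h : ∀ m < n, σ m = τ m) :
    S.branch r σ n = S.branch r τ n := by
  induction n with
  | zero => rfl
  | succ n ih => simp only [branch, ih fun m hm => h m (by omega), h n n.lt_succ_self]

theorem strictMono_lo_branch (r : β) (σ : ℕ → ι) : StrictMono fun n => S.lo (S.branch r σ n) :=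
  strictMono_nat_of_lt_succ fun _ => S.lo_lt_lo_child _ _

theorem antitone_hi_branch (r : β) (σ : ℕ → ι) : Antitone fun n => S.hi (S.branch r σ n) :=
  antitone_nat_of_succ_le fun _ => (S.hi_child_lt_hi _ _).le

theorem lo_branch_lt_of_hi_branch_le {r : β} {σ : ℕ → ι} {k : ℕ} {q : α}
    (hq : S.hi (S.branch r σ k) ≤ q) (m : ℕ) : S.lo (S.branch r σ m) < q := by
  rcases le_total m k with hmk | hkm
  · exact ((S.strictMono_lo_branch r σ).monotone hmk).trans_lt ((S.lo_lt_hi _ (σ k)).trans_le hq)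
  · exact (S.lo_lt_hi _ (σ m)).trans_le ((S.antitone_hi_branch r σ hkm).trans hq)

theorem lo_branch_succ_mem_Ioo (r : β) (σ : ℕ → ι) (n : ℕ) :
    S.lo (S.branch r σ (n + 1)) ∈ Ioo (S.lo r) (S.hi r) :=
  ⟨S.strictMono_lo_branch r σ n.succ_pos,
    (S.lo_lt_hi _ (σ (n + 1))).trans_le (S.antitone_hi_branch r σ (Nat.zero_le _))⟩

theorem disjoint_branch_succ {r : β} {σ τ : ℕ → ι} {n : ℕ} (hlt : ∀ m < n, σ m = τ m)
    (hn : σ n ≠ τ n) :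
    Disjoint (Ioo (S.lo (S.branch r σ (n + 1))) (S.hi (S.branch r σ (n + 1))))
      (Ioo (S.lo (S.branch r τ (n + 1))) (S.hi (S.branch r τ (n + 1)))) := by
  simp only [branch, S.branch_eq_of_forall_lt_eq hlt]
  exact S.disjoint_child _ hn

def cut (r : β) (σ : ℕ → ι) : Set (Ioo (S.lo r) (S.hi r)) :=
  {z | ∃ n, (z : α) ≤ S.lo (S.branch r σ n)}

theorem isLowerSet_cut (r : β) (σ : ℕ → ι) : IsLowerSet (S.cut r σ) :=
  fun _ _ hba ⟨n, hn⟩ => ⟨n, le_trans hba hn⟩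

theorem cut_ne_of_lo_branch_lt {r : β} {σ τ : ℕ → ι} {n : ℕ} (hlt : ∀ m < n, σ m = τ m)
    (hn : σ n ≠ τ n) (hpq : S.lo (S.branch r σ (n + 2)) < S.lo (S.branch r τ (n + 2))) :
    S.cut r σ ≠ S.cut r τ := by
  set q := S.lo (S.branch r τ (n + 2))
  have hq_not_mem : q ∉ Ioo (S.lo (S.branch r σ (n + 1))) (S.hi (S.branch r σ (n + 1))) :=
    Set.disjoint_right.mp (S.disjoint_branch_succ hlt hn) (S.lo_child_mem_Ioo _ _)
  have hhi_le : S.hi (S.branch r σ (n + 1)) ≤ q :=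
    not_lt.mp fun hq => hq_not_mem ⟨(S.lo_lt_lo_child _ _).trans hpq, hq⟩
  intro hcut
  have hq_mem : (⟨q, S.lo_branch_succ_mem_Ioo r τ (n + 1)⟩ : Ioo (S.lo r) (S.hi r)) ∈ S.cut r τ :=
    ⟨n + 2, le_rfl⟩
  rw [← hcut] at hq_mem
  obtain ⟨m, hm⟩ := hq_mem
  exact (S.lo_branch_lt_of_hi_branch_le hhi_le m).not_ge hm

theorem cut_injective (r : β) : Function.Injective (S.cut r) := by
  classical
  intro σ τ hcut
  by_contra hne
  have hex := Function.ne_iff.mp hne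
  set n := Nat.find hex
  have hn : σ n ≠ τ n := Nat.find_spec hex
  have hlt : ∀ m < n, σ m = τ m := fun m hm => not_not.mp (Nat.find_min hex hm)
  rcases lt_trichotomy (S.lo (S.branch r σ (n + 2))) (S.lo (S.branch r τ (n + 2)))
    with hpq | hpq | hpq
  · exact S.cut_ne_of_lo_branch_lt hlt hn hpq hcut
  · exact (S.disjoint_branch_succ hlt hn).ne_of_mem (S.lo_child_mem_Ioo _ _)
      (S.lo_child_mem_Ioo _ _) hpq
  · exact S.cut_ne_of_lo_branch_lt (fun m hm => (hlt m hm).symm) hn.symm hpq hcut.symm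

end IntervalSplitting

theorem card_arrow_le_card_lowerSet_of_split {α ι : Type u} [LinearOrder α] {P : α → α → Prop}
    (hsplit : ∀ u v, P u v → ∃ xi yi : ι → α, (∀ i, u < xi i ∧ xi i < yi i ∧ yi i < v) ∧
      Pairwise (Disjoint on fun i => Ioo (xi i) (yi i)) ∧ ∀ i, P (xi i) (yi i))
    {x y : α} (hxy : P x y) :
    #(ℕ → ι) ≤ #{A : Set (Ioo x y) // IsLowerSet A} := by
  choose X Y hXY hdisj hP using hsplit
  let S : IntervalSplitting α ι {p : α × α // P p.1 p.2} :=
    { lo := fun p => p.1.1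
      hi := fun p => p.1.2
      child := fun p i => ⟨(X _ _ p.2 i, Y _ _ p.2 i), hP _ _ p.2 i⟩
      lo_lt_lo_child := fun p i => (hXY _ _ p.2 i).1
      lo_child_lt_hi_child := fun p i => (hXY _ _ p.2 i).2.1
      hi_child_lt_hi := fun p i => (hXY _ _ p.2 i).2.2
      disjoint_child := fun p => hdisj _ _ p.2 }
  let r : {p : α × α // P p.1 p.2} := ⟨(x, y), hxy⟩
  exact mk_le_of_injective (f := fun σ => ⟨S.cut r σ, S.isLowerSet_cut r σ⟩)
    fun _ _ h => S.cut_injective r (congrArg Subtype.val h)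

def IsIntervalRankPos {α : Type u} [LinearOrder α] (lam : Cardinal.{u})
    (rk : α → α → Ordinal.{u} → Prop) : Prop :=
  ∀ (x y : α) (a : Ordinal.{u}), x < y → 0 < a →
    (rk x y a ↔ (∀ b < a, ¬ rk x y b) ∧
      ∀ (ι : Type u) (xi yi : ι → α), #ι = lam →
        (∀ i, x < xi i ∧ xi i < yi i ∧ yi i < y) →
        (∀ i j, i ≠ j → Disjoint (Set.Ioo (xi i) (yi i)) (Set.Ioo (xi j) (yi j))) →
        ∃ i, ∃ b < a, rk (xi i) (yi i) b)

namespace IsIntervalRankPos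

variable {α : Type u} [LinearOrder α] {lam : Cardinal.{u}} {rk : α → α → Ordinal.{u} → Prop}

theorem eq_of_rk (h : IsIntervalRankPos lam rk) {x y : α} (hxy : x < y) {a b : Ordinal.{u}}
    (ha : rk x y a) (hb : rk x y b) : a = b := by
  by_contra hne
  wlog hab : a < b generalizing a b
  · exact this hb ha (Ne.symm hne) (lt_of_le_of_ne (not_lt.mp hab) (Ne.symm hne))
  exact ((h x y b hxy (zero_le.trans_lt hab)).mp hb).1 a hab ha

theorem exists_rank_bound (h : IsIntervalRankPos lam rk) :
    ∃ c : Ordinal.{u}, 0 < c ∧ ∀ x y b, x < y → rk x y b → b < c := by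
  classical
  let f : α × α → Ordinal.{u} := fun p =>
    if hp : ∃ b, p.1 < p.2 ∧ rk p.1 p.2 b then hp.choose else 0
  refine ⟨Order.succ (⨆ p, f p), zero_le.trans_lt (Order.lt_succ _), ?_⟩
  intro x y b hxy hb
  have hex : ∃ b, x < y ∧ rk x y b := ⟨b, hxy, hb⟩
  have hfb : f (x, y) = b := by
    simp only [f, dif_pos hex]
    exact h.eq_of_rk hxy hex.choose_spec.2 hb
  rw [Order.lt_succ_iff, ← hfb]
  exact Ordinal.le_iSup f (x, y)

theorem exists_unranked_split (h : IsIntervalRankPos lam rk) {ι : Type u} (hι : #ι = lam)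
    {x y : α} (hxy : x < y) (hinf : ∀ a, ¬ rk x y a) :
    ∃ xi yi : ι → α, (∀ i, x < xi i ∧ xi i < yi i ∧ yi i < y) ∧
      Pairwise (Disjoint on fun i => Ioo (xi i) (yi i)) ∧
      ∀ i, xi i < yi i ∧ ∀ a, ¬ rk (xi i) (yi i) a := by
  obtain ⟨c, hc, hbound⟩ := h.exists_rank_bound
  have hfamily : ¬ ∀ (ι' : Type u) (xi yi : ι' → α), #ι' = lam →
      (∀ i, x < xi i ∧ xi i < yi i ∧ yi i < y) →
      (∀ i j, i ≠ j → Disjoint (Ioo (xi i) (yi i)) (Ioo (xi j) (yi j))) →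
      ∃ i, ∃ b < c, rk (xi i) (yi i) b :=
    fun hB => hinf c ((h x y c hxy hc).mpr ⟨fun b _ => hinf b, hB⟩)
  push Not at hfamily
  obtain ⟨ι', xi, yi, hι', hin, hdisj, hunranked⟩ := hfamily
  obtain ⟨e⟩ : Nonempty (ι ≃ ι') := Cardinal.eq.mp (hι.trans hι'.symm)
  exact ⟨xi ∘ e, yi ∘ e, fun i => hin (e i), fun i j hij => hdisj _ _ (e.injective.ne hij),
    fun i => ⟨(hin (e i)).2.1,
      fun a ha => hunranked (e i) a (hbound _ _ a (hin (e i)).2.1 ha) ha⟩⟩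

end IsIntervalRankPos

theorem stmt_6_general {α : Type u} [LinearOrder α] (lam : Cardinal.{u})
    (rk : α → α → Ordinal.{u} → Prop)
    (hrkpos : ∀ (x y : α) (a : Ordinal.{u}), x < y → 0 < a →
      (rk x y a ↔ (∀ b < a, ¬ rk x y b) ∧
        ∀ (ι : Type u) (xi yi : ι → α), #ι = lam →
          (∀ i, x < xi i ∧ xi i < yi i ∧ yi i < y) →
          (∀ i j, i ≠ j → Disjoint (Set.Ioo (xi i) (yi i)) (Set.Ioo (xi j) (yi j))) →
          ∃ i, ∃ b < a, rk (xi i) (yi i) b))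
    (x y : α) (hxy : x < y) (hinf : ∀ a : Ordinal.{u}, ¬ rk x y a) :
    lam ^ ℵ₀ ≤ #{A : Set (Set.Ioo x y) // IsLowerSet A} :=
  calc lam ^ ℵ₀ = #(ℕ → lam.out) := by simp
    _ ≤ _ := card_arrow_le_card_lowerSet_of_split (P := fun u v => u < v ∧ ∀ a, ¬ rk u v a)
      (fun _ _ huv => IsIntervalRankPos.exists_unranked_split hrkpos (mk_out lam) huv.1 huv.2)
      ⟨hxy, hinf⟩

/-- with the interval rank `rk` as in Statement 5, where
`lam = ⨆ n, lamn n` is strong limit of cofinality `ℵ₀` with `lamn` an increasing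
sequence of regular cardinals, if `rk x y = ∞` (i.e. `rk x y a` holds for no
ordinal `a`) then the interval `(x, y)` has at least `lam ^ ℵ₀` Dedekind cuts. -/
theorem stmt_6 {α : Type u} [LinearOrder α] (lam : Cardinal.{u}) (lamn : ℕ → Cardinal.{u})
    (hsl : lam.IsStrongLimit) (hcof : lam.ord.cof = ℵ₀)
    (hreg : ∀ n, (lamn n).IsRegular) (hmono : ∀ n, lamn n < lamn (n + 1))
    (hsup : lam = ⨆ n, lamn n)
    (rk : α → α → Ordinal.{u} → Prop)
    (hrk0 : ∀ x y : α, x < y → (rk x y 0 ↔ #(Set.Ioo x y) < lam))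
    (hrkpos : ∀ (x y : α) (a : Ordinal.{u}), x < y → 0 < a →
      (rk x y a ↔ (∀ b < a, ¬ rk x y b) ∧
        ∀ (ι : Type u) (xi yi : ι → α), #ι = lam →
          (∀ i, x < xi i ∧ xi i < yi i ∧ yi i < y) →
          (∀ i j, i ≠ j → Disjoint (Set.Ioo (xi i) (yi i)) (Set.Ioo (xi j) (yi j))) →
          ∃ i, ∃ b < a, rk (xi i) (yi i) b))
    (x y : α) (hxy : x < y) (hinf : ∀ a : Ordinal.{u}, ¬ rk x y a) :
    lam ^ ℵ₀ ≤ #{A : Set (Set.Ioo x y) // IsLowerSet A} :=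
  stmt_6_general lam rk hrkpos x y hxy hinf
end

section
/- Let T be a topology on Ω with base B of cardinality ≤ μ, and let ⪯ be the specialization preorder (x ⪯ y iff every basic open set containing y contains x), assumed to be a partial order. If J ⊆ Ω is linearly ordered by ⪯, then there is a subset I ⊆ J of cardinality ≤ μ which is dense in J: for all x ≺ y ≺ z in J there exists w ∈ I with x ≺ w ≺ z. -/
/-!
For `x ≺ y ≺ z` in the chain, pick `U ∈ B` containing `x` but not `y`, and `V ∈ B` containing
`y` but not `z`. Any `w ∈ J ∩ (V \ U)` then lies strictly between `x` and `z`, because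
comparability with `x` and `z` is forced the right way by `U` and `V`. Choosing one such `w`
per pair `(V, U) ∈ B × B` gives a dense subset of size at most `#B * #B ≤ μ`.
-/

open Cardinal

/-- The specialization preorder of a base `B`: `x ⪯ y` iff every `U ∈ B`
containing `y` contains `x`. -/
def SpecLE {Ω : Type u} (B : Set (Set Ω)) (x y : Ω) : Prop :=
  ∀ U ∈ B, y ∈ U → x ∈ U

universe u

variable {Ω : Type u} {B : Set (Set Ω)}

theorem SpecLE.exists_mem_not_mem_of_ne
    (hsep : ∀ x y : Ω, x ≠ y → ∃ U ∈ B, (x ∈ U ↔ y ∉ U))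
    {x y : Ω} (hxy : SpecLE B x y) (hne : x ≠ y) : ∃ U ∈ B, x ∈ U ∧ y ∉ U := by
  obtain ⟨U, hU, hiff⟩ := hsep x y hne
  have hy : y ∉ U := fun hy => hiff.mp (hxy U hU hy) hy
  exact ⟨U, hU, hiff.mpr hy, hy⟩

theorem SpecLE.of_comparable_of_mem_not_mem {x w : Ω} {U : Set Ω}
    (hcomp : SpecLE B x w ∨ SpecLE B w x) (hU : U ∈ B) (hx : x ∈ U) (hw : w ∉ U) :
    SpecLE B x w ∧ x ≠ w := by
  refine ⟨hcomp.resolve_right fun hwx => hw (hwx U hU hx), ?_⟩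
  rintro rfl
  exact hw hx

noncomputable def chainWitnesses (B : Set (Set Ω)) (J : Set Ω) : Set Ω :=
  Set.range fun p : {p : B × B // (J ∩ ((p.1 : Set Ω) \ p.2)).Nonempty} => p.2.some

theorem chainWitnesses_subset (J : Set Ω) : chainWitnesses B J ⊆ J := by
  rintro _ ⟨p, rfl⟩
  exact p.2.some_mem.1

theorem mk_chainWitnesses_le (J : Set Ω) : #(chainWitnesses B J) ≤ #B * #B :=
  calc #(chainWitnesses B J) ≤ #{p : B × B // (J ∩ ((p.1 : Set Ω) \ p.2)).Nonempty} :=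
        mk_range_le
    _ ≤ #(B × B) := mk_subtype_le _
    _ = #B * #B := by rw [mk_prod, lift_id]

theorem exists_mem_chainWitnesses {J U V : Set Ω} (hU : U ∈ B) (hV : V ∈ B)
    (h : (J ∩ (U \ V)).Nonempty) : ∃ w ∈ chainWitnesses B J, w ∈ J ∧ w ∈ U ∧ w ∉ V :=
  let p : {p : B × B // (J ∩ ((p.1 : Set Ω) \ p.2)).Nonempty} := ⟨(⟨U, hU⟩, ⟨V, hV⟩), h⟩
  ⟨p.2.some, ⟨p, rfl⟩, p.2.some_mem.1, p.2.some_mem.2⟩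

/-- if `B` is a base of cardinality `≤ μ`, any two distinct points
are separated by a member of `B` (so `⪯` is a partial order), and `J ⊆ Ω` is a
`⪯`-chain, then some `I ⊆ J` of cardinality `≤ μ` is dense in `J`: whenever
`x ≺ y ≺ z` in `J` there is `w ∈ I` with `x ≺ w ≺ z`. -/
theorem stmt_9 {Ω : Type u} (B : Set (Set Ω)) (μ : Cardinal.{u})
    (hμ : ℵ₀ ≤ μ) (hB : #B ≤ μ)
    (hsep : ∀ x y : Ω, x ≠ y → ∃ U ∈ B, (x ∈ U ↔ y ∉ U))
    (J : Set Ω) (hchain : ∀ x ∈ J, ∀ y ∈ J, SpecLE B x y ∨ SpecLE B y x) :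
    ∃ I : Set Ω, I ⊆ J ∧ #I ≤ μ ∧
      ∀ x ∈ J, ∀ y ∈ J, ∀ z ∈ J,
        (SpecLE B x y ∧ x ≠ y) → (SpecLE B y z ∧ y ≠ z) →
        ∃ w ∈ I, (SpecLE B x w ∧ x ≠ w) ∧ (SpecLE B w z ∧ w ≠ z) := by
  refine ⟨chainWitnesses B J, chainWitnesses_subset J, ?_, ?_⟩
  · calc #(chainWitnesses B J) ≤ #B * #B := mk_chainWitnesses_le J
      _ ≤ μ * μ := mul_le_mul' hB hB
      _ = μ := mul_eq_self hμ
  · rintro x hx y hy z hz ⟨hxy, hxy'⟩ ⟨hyz, hyz'⟩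
    obtain ⟨U, hU, hxU, hyU⟩ := SpecLE.exists_mem_not_mem_of_ne hsep hxy hxy'
    obtain ⟨V, hV, hyV, hzV⟩ := SpecLE.exists_mem_not_mem_of_ne hsep hyz hyz'
    obtain ⟨w, hwI, hwJ, hwV, hwU⟩ := exists_mem_chainWitnesses hV hU ⟨y, hy, hyV, hyU⟩
    exact ⟨w, hwI, SpecLE.of_comparable_of_mem_not_mem (hchain x hx w hwJ) hU hxU hwU,
      SpecLE.of_comparable_of_mem_not_mem (hchain w hwJ z hz) hV hwV hzV⟩
end

section
/- Let J be a linear order and I ⊆ J a dense subset (between any two elements of J with something strictly between them lies an element of I). Then every Dedekind cut of I is the restriction of at most 3 Dedekind cuts of J; consequently the number of Dedekind cuts of J is at most 3 times the number of Dedekind cuts of I. -/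
open Cardinal

/-!
Given lower sets `Y₁ ⊊ Y₂ ⊊ Y₃ ⊊ Y₄`, pick `a ∈ Y₂ \ Y₁`, `b ∈ Y₃ \ Y₂`, `c ∈ Y₄ \ Y₃`; then
`a < b < c`, so density gives `w ∈ I` with `a < w < c`, and `w` lies in `Y₄` but not in `Y₁`.
Hence each fibre of the restriction map from lower sets of `J` to lower sets of `I`, being a
chain, has at most three elements.
-/

theorem Cardinal.mk_le_of_forall_strictMono_exists_notMem {β : Type*} [LinearOrder β]
    {s : Set β} {n : ℕ} (h : ∀ f : Fin (n + 1) → β, StrictMono f → ∃ i, f i ∉ s) :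
    #s ≤ n := by
  refine card_le_of fun t => ?_
  by_contra! ht
  obtain ⟨u, -, hu⟩ := Finset.exists_subset_card_eq (Nat.succ_le_of_lt ht)
  obtain ⟨i, hi⟩ := h _ (Subtype.strictMono_coe (· ∈ s) |>.comp (u.orderEmbOfFin hu).strictMono)
  exact hi (u.orderEmbOfFin hu i).2

theorem IsLowerSet.lt_of_mem_of_notMem {α : Type*} [LinearOrder α] {s : Set α}
    (hs : IsLowerSet s) {a b : α} (ha : a ∈ s) (hb : b ∉ s) : a < b :=
  lt_of_not_ge fun hba => hb (hs hba ha)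

section Dense

variable {α : Type*} [LinearOrder α] {I : Set α}

theorem inter_ne_inter_of_ssubset_of_ssubset_of_ssubset
    (hI : ∀ x y z : α, x < y → y < z → ∃ w ∈ I, x < w ∧ w < z)
    {Y₁ Y₂ Y₃ Y₄ : Set α} (h₁ : IsLowerSet Y₁) (h₂ : IsLowerSet Y₂) (h₃ : IsLowerSet Y₃)
    (h₄ : IsLowerSet Y₄) (h₁₂ : Y₁ ⊂ Y₂) (h₂₃ : Y₂ ⊂ Y₃) (h₃₄ : Y₃ ⊂ Y₄) :
    Y₁ ∩ I ≠ Y₄ ∩ I := by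
  obtain ⟨a, ha₂, ha₁⟩ := Set.exists_of_ssubset h₁₂
  obtain ⟨b, hb₃, hb₂⟩ := Set.exists_of_ssubset h₂₃
  obtain ⟨c, hc₄, hc₃⟩ := Set.exists_of_ssubset h₃₄
  obtain ⟨w, hwI, haw, hwc⟩ :=
    hI a b c (h₂.lt_of_mem_of_notMem ha₂ hb₂) (h₃.lt_of_mem_of_notMem hb₃ hc₃)
  intro h
  have hw₁ : w ∈ Y₁ ∩ I := h ▸ ⟨h₄ hwc.le hc₄, hwI⟩
  exact ha₁ (h₁ haw.le hw₁.1)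

def LowerSet.restrict (I : Set α) (Y : LowerSet α) : LowerSet I :=
  ⟨Subtype.val ⁻¹' Y, Y.lower.preimage (Subtype.mono_coe (· ∈ I))⟩

theorem LowerSet.mk_le_three_mul_mk_of_dense
    (hI : ∀ x y z : α, x < y → y < z → ∃ w ∈ I, x < w ∧ w < z) :
    #(LowerSet α) ≤ 3 * #(LowerSet I) := by
  rw [mul_comm]
  refine mk_le_mk_mul_of_mk_preimage_le (LowerSet.restrict I) fun B => ?_
  refine mk_le_of_forall_strictMono_exists_notMem fun Y hY => ?_
  by_contra! hB
  have hrestrict (i : Fin 4) : (Y i : Set α) ∩ I = Subtype.val '' (B : Set I) := by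
    rw [← hB i, Set.inter_comm]
    exact (Subtype.image_preimage_coe I _).symm
  refine inter_ne_inter_of_ssubset_of_ssubset_of_ssubset hI (Y 0).lower (Y 1).lower (Y 2).lower
    (Y 3).lower (hY (by decide)) (hY (by decide)) (hY (by decide)) ?_
  rw [hrestrict, hrestrict]

end Dense

def LowerSet.equivSubtype (α : Type*) [LE α] : LowerSet α ≃ {s : Set α // IsLowerSet s} where
  toFun Y := ⟨Y, Y.lower⟩
  invFun s := ⟨s.1, s.2⟩

/-- if `I` is dense in the linear order `J` (between any two
elements with something strictly between lies a member of `I`), then lower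
parts `Y₁ ⊊ Y₂ ⊊ Y₃ ⊊ Y₄` of four distinct Dedekind cuts of `J` cannot all have
the same restriction to `I`; consequently the number of Dedekind cuts of `J` is
at most `3` times the number of Dedekind cuts of `I`. -/
theorem stmt_10 {α : Type u} [LinearOrder α] (I : Set α)
    (hdense : ∀ x y z : α, x < y → y < z → ∃ w ∈ I, x < w ∧ w < z) :
    (∀ Y₁ Y₂ Y₃ Y₄ : Set α,
      IsLowerSet Y₁ → IsLowerSet Y₂ → IsLowerSet Y₃ → IsLowerSet Y₄ →
      Y₁ ⊂ Y₂ → Y₂ ⊂ Y₃ → Y₃ ⊂ Y₄ →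
      ¬ (Y₁ ∩ I = Y₂ ∩ I ∧ Y₂ ∩ I = Y₃ ∩ I ∧ Y₃ ∩ I = Y₄ ∩ I)) ∧
    #{A : Set α // IsLowerSet A} ≤ 3 * #{A : Set I // IsLowerSet A} := by
  refine ⟨fun Y₁ Y₂ Y₃ Y₄ h₁ h₂ h₃ h₄ h₁₂ h₂₃ h₃₄ ⟨e₁₂, e₂₃, e₃₄⟩ => ?_, ?_⟩
  · exact inter_ne_inter_of_ssubset_of_ssubset_of_ssubset hdense h₁ h₂ h₃ h₄ h₁₂ h₂₃ h₃₄
      (e₁₂.trans (e₂₃.trans e₃₄))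
  · rw [← mk_congr (LowerSet.equivSubtype α), ← mk_congr (LowerSet.equivSubtype I)]
    exact LowerSet.mk_le_three_mul_mk_of_dense hdense
end

section
/- Let Ω be a set of cardinality λ, where λ is a strong limit cardinal of cofinality ℵ₀, let ⟨Z_ε : ε < κ⟩ (κ < λ) be a partition of Ω, and let ⟨U_ζ : ζ < λ⟩ be a list of subsets of Ω. Suppose T is a family of subsets of Ω with |T| > λ. Then there exists U ∈ T such that for every ξ < λ there are points α, β ∈ Ω with: α ∈ U ↔ β ∉ U; for all ζ < ξ, α ∈ U_ζ ↔ β ∈ U_ζ; and for all ε < κ, α ∈ Z_ε ↔ β ∈ Z_ε. -/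
open Cardinal Set

/- Let `α E_ξ β` mean that `α` and `β` lie in the same `U_ζ` (`ζ < ξ`) and the same `Z_ε`.
The unions of `E_ξ`-classes are exactly the preimages under the map sending a point to its
membership pattern, so for `ξ < λ` there are at most `2 ^ 2 ^ (|ξ| + κ) < λ` of them, `λ` being a
strong limit, and at most `λ` over all `ξ < λ`. As `|T| > λ`, some `U ∈ T` is a union of
`E_ξ`-classes for no `ξ`, i.e. for every `ξ` it separates some `E_ξ`-equivalent pair. -/

theorem Set.exists_apply_eq_and_mem_iff_notMem_of_notMem_range_preimage {α β : Type*}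
    {f : α → β} {U : Set α} (hU : U ∉ range (preimage f)) :
    ∃ a b, f a = f b ∧ (a ∈ U ↔ b ∉ U) := by
  by_contra h
  refine hU ⟨f '' U, Subset.antisymm ?_ (subset_preimage_image f U)⟩
  rintro a ⟨b, hb, hba⟩
  by_contra ha
  exact h ⟨b, a, hba, fun _ => ha, fun _ => hb⟩

theorem Cardinal.mk_range_preimage_le {α β : Type u} (f : α → β) :
    #(range (preimage f : Set β → Set α)) ≤ 2 ^ #β :=
  mk_range_le.trans_eq mk_set

def membershipPattern {Ω ι : Type u} (Us : Ordinal.{u} → Set Ω) (Z : ι → Set Ω)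
    (ξ : Ordinal.{u}) (a : Ω) : Set ξ.ToType × Set ι :=
  ({t | a ∈ Us t}, {ε | a ∈ Z ε})

theorem mk_range_preimage_membershipPattern_le {Ω ι : Type u} {lam : Cardinal.{u}}
    (hlam : lam.IsStrongLimit) (hι : #ι < lam) (Us : Ordinal.{u} → Set Ω) (Z : ι → Set Ω)
    {ξ : Ordinal.{u}} (hξ : ξ < lam.ord) :
    #(range (preimage (membershipPattern Us Z ξ))) ≤ lam := by
  have hsetξ : #(Set ξ.ToType) < lam := by
    rw [mk_set, mk_toType]
    exact hlam.isStrongPrelimit (lt_ord.mp hξ)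
  have hpattern : #(Set ξ.ToType × Set ι) < lam := by
    rw [mk_prod, lift_id, lift_id]
    exact mul_lt_of_lt hlam.aleph0_le hsetξ (by rw [mk_set]; exact hlam.isStrongPrelimit hι)
  exact (mk_range_preimage_le _).trans (hlam.isStrongPrelimit hpattern).le

theorem stmt_13_general {Ω : Type u} (T : Set (Set Ω)) (lam : Cardinal.{u})
    (hsl : lam.IsStrongLimit)
    (hT : lam < #T)
    (κ : Cardinal.{u}) (hκ : κ < lam) (ι : Type u) (hι : #ι = κ)
    (Z : ι → Set Ω)
    (Us : Ordinal.{u} → Set Ω) :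
    ∃ U ∈ T, ∀ ξ < lam.ord, ∃ α β : Ω,
      (α ∈ U ↔ β ∉ U) ∧
      (∀ ζ < ξ, (α ∈ Us ζ ↔ β ∈ Us ζ)) ∧
      (∀ ε : ι, (α ∈ Z ε ↔ β ∈ Z ε)) := by
  have hsaturated : #(⋃ ξ < lam.ord, range (preimage (membershipPattern Us Z ξ))) ≤ lam :=
    mk_biUnion_le_of_le (card_ord lam).le hsl.aleph0_le _ fun ξ hξ =>
      mk_range_preimage_membershipPattern_le hsl (hι ▸ hκ) Us Z hξ
  obtain ⟨U, hUT, hU⟩ := not_subset.mp fun hTsub =>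
    ((mk_le_mk_of_subset hTsub).trans hsaturated).not_gt hT
  refine ⟨U, hUT, fun ξ hξ => ?_⟩
  obtain ⟨α, β, hαβ, hUαβ⟩ :=
    exists_apply_eq_and_mem_iff_notMem_of_notMem_range_preimage fun h => hU (mem_biUnion hξ h)
  obtain ⟨hUs, hZ⟩ := Prod.ext_iff.mp hαβ
  refine ⟨α, β, hUαβ, fun ζ hζ => ?_, fun ε => Set.ext_iff.mp hZ ε⟩
  simpa [membershipPattern] using Set.ext_iff.mp hUs (Ordinal.ToType.mk ⟨ζ, hζ⟩)

/-- if `lam` is strong limit of cofinality `ℵ₀`, `|Ω| = lam`,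
`⟨Z ε : ε < κ⟩` (`κ < lam`) is a partition of `Ω`, `⟨Us ζ : ζ < lam⟩` a list of
subsets of `Ω` (indexed by ordinals below `lam.ord`), and `|T| > lam`, then
some `U ∈ T` satisfies: for every `ξ < lam.ord` there are `α β ∈ Ω` with
`α ∈ U ↔ β ∉ U`, agreeing on each `Us ζ` for `ζ < ξ` and on each `Z ε`. -/
theorem stmt_13 {Ω : Type u} (T : Set (Set Ω)) (lam : Cardinal.{u})
    (hsl : lam.IsStrongLimit) (hcof : lam.ord.cof = ℵ₀)
    (hΩ : #Ω = lam) (hT : lam < #T)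
    (κ : Cardinal.{u}) (hκ : κ < lam) (ι : Type u) (hι : #ι = κ)
    (Z : ι → Set Ω) (hdisj : ∀ i j, i ≠ j → Disjoint (Z i) (Z j))
    (hcover : (⋃ i, Z i) = Set.univ)
    (Us : Ordinal.{u} → Set Ω) :
    ∃ U ∈ T, ∀ ξ < lam.ord, ∃ α β : Ω,
      (α ∈ U ↔ β ∉ U) ∧
      (∀ ζ < ξ, (α ∈ Us ζ ↔ β ∈ Us ζ)) ∧
      (∀ ε : ι, (α ∈ Z ε ↔ β ∈ Z ε)) :=
  stmt_13_general T lam hsl hT κ hκ ι hι Z Us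
end

section
/- Let μ_l (l < ω) be an increasing sequence of cardinals. Suppose there exist distinct points x_ν (ν ∈ ⋃_n ∏_{l<n} μ_l) and open sets U_η (η ∈ ∏_{l<ω} μ_l) in a topological space such that U_η ∩ Z = {x_ν : ν = ρ⌢⟨ζ⟩ and (ρ is not an initial segment of η, or ρ ⊲ η and η(lg ρ) = ζ)}, where Z = {x_ν : ν}. Then there exist distinct points x'_ν and open sets U'_η such that U'_η ∩ Z' = {x'_ν ∈ Z' : ν is not an initial segment of η}, i.e., the 'complement-of-branch' basic configuration (clause (c) of Theorem 22) holds. -/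
open Cardinal

/-- A finite sequence of length `n` valid for the sequence of cardinals `μc`:
its entries below `n` are ordinals below `(μc l).ord`. -/
def ValidFin (μc : ℕ → Cardinal.{u}) (n : ℕ) (ν : ℕ → Ordinal.{u}) : Prop :=
  ∀ l < n, ν l < (μc l).ord

/-- An infinite branch valid for `μc`. -/
def ValidBr (μc : ℕ → Cardinal.{u}) (η : ℕ → Ordinal.{u}) : Prop :=
  ∀ l, η l < (μc l).ord

/-!
Interleave zeros into the sequences: `spread ν` carries `ν l` at position `2 l + 2` and `0`
everywhere else, and the point attached to `ν` of length `n` is `x_{spread ν ⌢ ⟨1⟩}`, of length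
`2 n + 2`. Its last entry `1` sits at position `2 n + 1`, where every `spread η` is `0`; so by
the hypothesis on `U` this point lies in `U_{spread η}` exactly when `spread ν` is not an initial
segment of `spread η`, i.e. when `ν` is not an initial segment of `η`. Monotonicity of `μ` keeps
the spread sequences valid, and strictness gives `1 < μ_{2n+1}`, which is why the marker is put
at an odd position.
-/

section Spread

variable {α : Type*} [Zero α]

def spread (η : ℕ → α) (k : ℕ) : α :=
  if k % 2 = 0 ∧ k ≠ 0 then η (k / 2 - 1) else 0

theorem spread_two_mul_add_two (η : ℕ → α) (l : ℕ) : spread η (2 * l + 2) = η l := by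
  rw [spread, if_pos (by omega)]
  congr 1
  omega

theorem spread_eq_zero (η : ℕ → α) {k : ℕ} (hk : k % 2 = 1 ∨ k = 0) : spread η k = 0 := by
  rw [spread, if_neg (by omega)]

theorem spread_eqOn_iff (ν η : ℕ → α) (n : ℕ) :
    (∀ k < 2 * n + 1, spread ν k = spread η k) ↔ ∀ l < n, ν l = η l := by
  refine ⟨fun h l hl => ?_, fun h k hk => ?_⟩
  · simpa only [spread_two_mul_add_two] using h (2 * l + 2) (by omega)
  · rcases Nat.even_or_odd' k with ⟨j, rfl | rfl⟩
    · rcases j with _ | l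
      · rw [spread_eq_zero ν (by omega), spread_eq_zero η (by omega)]
      · simpa only [Nat.mul_succ, spread_two_mul_add_two] using h l (by omega)
    · rw [spread_eq_zero ν (by omega), spread_eq_zero η (by omega)]

variable [One α]

def markedSpread (n : ℕ) (ν : ℕ → α) : ℕ → α :=
  Function.update (spread ν) (2 * n + 1) 1

theorem markedSpread_of_lt {n k : ℕ} (ν : ℕ → α) (hk : k < 2 * n + 1) :
    markedSpread n ν k = spread ν k :=
  Function.update_of_ne (by omega) _ _

theorem markedSpread_eqOn_spread_iff (ν η : ℕ → α) (n : ℕ) :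
    (∀ k < 2 * n + 1, markedSpread n ν k = spread η k) ↔ ∀ l < n, ν l = η l := by
  rw [← spread_eqOn_iff ν η n]
  exact forall₂_congr fun k hk => by rw [markedSpread_of_lt ν hk]

theorem markedSpread_eqOn_iff (ν ρ : ℕ → α) (n : ℕ) :
    (∀ k < 2 * n + 2, markedSpread n ν k = markedSpread n ρ k) ↔ ∀ l < n, ν l = ρ l := by
  rw [← spread_eqOn_iff ν ρ n]
  constructor
  · intro h k hk
    simpa only [markedSpread_of_lt _ hk] using h k (by omega)
  · intro h k hk
    rcases Nat.lt_succ_iff_lt_or_eq.1 hk with hk | rfl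
    · simpa only [markedSpread_of_lt _ hk] using h k hk
    · simp only [markedSpread, Function.update_self]

end Spread

section Validity

variable {μc : ℕ → Cardinal.{u}}

theorem ValidBr.spread (hmono : Monotone μc) (hpos : ∀ k, 0 < μc k) {η : ℕ → Ordinal.{u}}
    (hη : ValidBr μc η) : ValidBr μc (spread η) := by
  intro k
  unfold _root_.spread
  split_ifs
  · exact (hη _).trans_le (ord_le_ord.2 (hmono (by omega)))
  · simpa [lt_ord] using hpos k

theorem ValidFin.markedSpread (hmono : Monotone μc) (hpos : ∀ k, 0 < μc k) {n : ℕ}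
    (hone : 1 < μc (2 * n + 1)) {ν : ℕ → Ordinal.{u}} (hν : ValidFin μc n ν) :
    ValidFin μc (2 * n + 2) (_root_.markedSpread n ν) := by
  intro k hk
  rcases Nat.lt_succ_iff_lt_or_eq.1 hk with hk | rfl
  · rw [markedSpread_of_lt ν hk]
    unfold _root_.spread
    split_ifs
    · exact (hν _ (by omega)).trans_le (ord_le_ord.2 (hmono (by omega)))
    · simpa [lt_ord] using hpos k
  · simpa [_root_.markedSpread, lt_ord] using hone

end Validity

/-- suppose `μc` is an increasing sequence of cardinals and in a
topological space `(Ω, T)` there are pairwise distinct points `x n ν`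
(`ν ∈ ∏_{l<n} μc l`) and open sets `U η` (`η ∈ ∏_{l<ω} μc l`) realizing
configuration (d): `x n ν ∈ U η` iff `n ≥ 1` and (if `ν↾(n-1)` is an initial
segment of `η` then `η (n-1) = ν (n-1)`). Then there are pairwise distinct
points `x' n ν` and open sets `U' η` realizing the complement-of-branch
configuration (c): `x' n ν ∈ U' η` iff `ν` is not an initial segment of `η`. -/
theorem stmt_14 (μc : ℕ → Cardinal.{u}) (hmono : ∀ l, μc l < μc (l + 1))
    {Ω : Type u} (T : Set (Set Ω))
    (x : ℕ → (ℕ → Ordinal.{u}) → Ω)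
    (hxdist : ∀ n ν m ρ, ValidFin μc n ν → ValidFin μc m ρ →
      x n ν = x m ρ → n = m ∧ ∀ l < n, ν l = ρ l)
    (U : (ℕ → Ordinal.{u}) → Set Ω)
    (hUopen : ∀ η, ValidBr μc η → U η ∈ T)
    (hconf : ∀ η, ValidBr μc η → ∀ n ν, ValidFin μc n ν →
      (x n ν ∈ U η ↔ 1 ≤ n ∧ ((∀ l < n - 1, ν l = η l) → η (n - 1) = ν (n - 1)))) :
    ∃ x' : ℕ → (ℕ → Ordinal.{u}) → Ω, ∃ U' : (ℕ → Ordinal.{u}) → Set Ω,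
      (∀ n ν m ρ, ValidFin μc n ν → ValidFin μc m ρ →
        x' n ν = x' m ρ → n = m ∧ ∀ l < n, ν l = ρ l) ∧
      (∀ η, ValidBr μc η → U' η ∈ T) ∧
      (∀ η, ValidBr μc η → ∀ n ν, ValidFin μc n ν →
        (x' n ν ∈ U' η ↔ ¬ ∀ l < n, ν l = η l)) := by
  have hstrict : StrictMono μc := strictMono_nat_of_lt_succ hmono
  rcases eq_or_ne (μc 0) 0 with h0 | h0
  · have hnone : ∀ η, ¬ ValidBr μc η := fun η hη => by simpa [h0] using hη 0
    exact ⟨x, U, hxdist, fun η hη => (hnone η hη).elim, fun η hη => (hnone η hη).elim⟩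
  have hpos : ∀ k, 0 < μc k := fun k => (pos_iff_ne_zero.2 h0).trans_le (hstrict.monotone k.zero_le)
  have hone : ∀ n, 1 < μc (2 * n + 1) := fun n =>
    (Cardinal.one_le_iff_ne_zero.2 h0).trans_lt (hstrict (by omega))
  have hbr := fun η (hη : ValidBr μc η) => hη.spread hstrict.monotone hpos
  have hfin := fun n ν (hν : ValidFin μc n ν) => hν.markedSpread hstrict.monotone hpos (hone n)
  refine ⟨fun n ν => x (2 * n + 2) (markedSpread n ν), fun η => U (spread η), ?_,
    fun η hη => hUopen _ (hbr η hη), ?_⟩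
  · intro n ν m ρ hν hρ heq
    obtain ⟨hnm, hagree⟩ := hxdist _ _ _ _ (hfin n ν hν) (hfin m ρ hρ) heq
    obtain rfl : n = m := by omega
    exact ⟨rfl, (markedSpread_eqOn_iff ν ρ n).1 hagree⟩
  · intro η hη n ν hν
    have hmarker : spread η (2 * n + 1) ≠ markedSpread n ν (2 * n + 1) := by
      rw [spread_eq_zero η (by omega), markedSpread, Function.update_self]
      exact zero_ne_one
    rw [hconf _ (hbr η hη) _ _ (hfin n ν hν), show 2 * n + 2 - 1 = 2 * n + 1 by omega,
      markedSpread_eqOn_spread_iff]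
    exact ⟨fun h hagree => hmarker (h.2 hagree), fun h => ⟨by omega, fun hagree => (h hagree).elim⟩⟩
end

section
/- Let T be a topology on a set Ω and suppose there exist points x_n ∈ Ω and open sets U_n ∈ T for n < ω such that: x_n ∈ U_n, x_n ∉ ⋃_{l<n} U_l, and x_l ∉ U_n for l < n. Then {U ∩ {x_n : n < ω} : U ∈ T} contains all subsets of the infinite set {x_n : n < ω}; in particular |T| ≥ 2^{ℵ₀}. -/
/-! The hypotheses say precisely that `x m ∈ U n ↔ m = n`, so the open set `⋃_{n ∈ A} U n` meets
the sequence exactly in `x '' A`. As `x` is injective, distinct `A ⊆ ℕ` give distinct traces,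
hence distinct open sets, and `T` has at least `#(Set ℕ) = 2 ^ ℵ₀` elements. -/

open Cardinal

section SeparatedSequence

variable {Ω : Type*} {x : ℕ → Ω} {U : ℕ → Set Ω}

theorem mem_iff_eq_of_separated (hmem : ∀ n, x n ∈ U n) (hnot1 : ∀ n, x n ∉ ⋃ l < n, U l)
    (hnot2 : ∀ l n, l < n → x l ∉ U n) (m n : ℕ) : x m ∈ U n ↔ m = n := by
  refine ⟨fun hx => ?_, fun h => h ▸ hmem m⟩
  rcases lt_trichotomy m n with h | h | h
  · exact absurd hx (hnot2 m n h)
  · exact h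
  · exact absurd (Set.mem_iUnion₂.mpr ⟨n, h, hx⟩) (hnot1 m)

theorem injective_of_separated (hmem : ∀ n, x n ∈ U n) (hnot1 : ∀ n, x n ∉ ⋃ l < n, U l)
    (hnot2 : ∀ l n, l < n → x l ∉ U n) : Function.Injective x := fun m n h =>
  (mem_iff_eq_of_separated hmem hnot1 hnot2 m n).mp (h ▸ hmem n)

theorem sUnion_image_inter_range_of_separated (hmem : ∀ n, x n ∈ U n)
    (hnot1 : ∀ n, x n ∉ ⋃ l < n, U l) (hnot2 : ∀ l n, l < n → x l ∉ U n) (A : Set ℕ) :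
    ⋃₀ (U '' A) ∩ Set.range x = x '' A := by
  ext y
  simp only [Set.sUnion_image, Set.mem_inter_iff, Set.mem_iUnion, Set.mem_range, Set.mem_image,
    exists_prop]
  constructor
  · rintro ⟨⟨n, hn, hy⟩, m, rfl⟩
    exact ⟨m, (mem_iff_eq_of_separated hmem hnot1 hnot2 m n).mp hy ▸ hn, rfl⟩
  · rintro ⟨n, hn, rfl⟩
    exact ⟨⟨n, hn, hmem n⟩, n, rfl⟩

end SeparatedSequence

theorem sUnion_image_mem {Ω ι : Type*} {T : Set (Set Ω)} (hT : ∀ S ⊆ T, ⋃₀ S ∈ T)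
    {U : ι → Set Ω} (hUT : ∀ n, U n ∈ T) (A : Set ι) : ⋃₀ (U '' A) ∈ T :=
  hT _ (Set.image_subset_iff.mpr fun n _ => hUT n)

theorem two_power_aleph0_le_mk_of_injective {α : Type*} {f : Set ℕ → α}
    (hf : Function.Injective f) : 2 ^ ℵ₀ ≤ #α := by
  simpa using lift_mk_le'.mpr ⟨⟨f, hf⟩⟩

/-- if `T` is closed under arbitrary unions and there are points
`x n` and open sets `U n` with `x n ∈ U n`, `x n ∉ ⋃_{l<n} U l` and
`x l ∉ U n` for `l < n`, then every subset of `{x n : n < ω}` is the trace of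
an open set; in particular `|T| ≥ 2 ^ ℵ₀`. -/
theorem stmt_15 {Ω : Type u} (T : Set (Set Ω)) (hT : ∀ S ⊆ T, ⋃₀ S ∈ T)
    (x : ℕ → Ω) (U : ℕ → Set Ω)
    (hUT : ∀ n, U n ∈ T) (hmem : ∀ n, x n ∈ U n)
    (hnot1 : ∀ n, x n ∉ ⋃ l < n, U l)
    (hnot2 : ∀ l n, l < n → x l ∉ U n) :
    (∀ A : Set ℕ, ∃ V ∈ T, V ∩ Set.range x = x '' A) ∧ 2 ^ ℵ₀ ≤ #T := by
  have trace := sUnion_image_inter_range_of_separated hmem hnot1 hnot2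
  have open_union := sUnion_image_mem hT hUT
  have union_injective : Function.Injective fun A => ⋃₀ (U '' A) :=
    fun A B (h : ⋃₀ (U '' A) = ⋃₀ (U '' B)) =>
      Set.image_injective.mpr (injective_of_separated hmem hnot1 hnot2)
        (by rw [← trace A, ← trace B, h])
  exact ⟨fun A => ⟨_, open_union A, trace A⟩, two_power_aleph0_le_mk_of_injective
    ((Set.injective_codRestrict open_union).mpr union_injective)⟩
end

section
/- Let T be a topology on Ω. Suppose P = {(U,V) : U ⊆ V, U, V ∈ T, V \ U ∉ I} where I is the ideal {Z ⊆ Ω : |{U ∩ Z : U ∈ T}| < μ}, and suppose for every (U₀,U₁) ∈ P there exists W ∈ T with (U₀,W) ∈ P and (W,U₁) ∈ P. Then there exist distinct points x_q ∈ Ω for q ∈ ℚ such that for every real r, some open set U ∈ T satisfies U ∩ {x_q : q ∈ ℚ} = {x_q : q < r}. -/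
/-!
The relation `U ≺ V` (`U ⊆ V` open with `V \ U ∉ I`) is a strict order on sets, dense by
hypothesis, with `∅ ≺ Ω`. A maximal chain through `∅` and `Ω` is then a nontrivial dense linear
order, so the countable order `ℚ ×ₗ Bool` embeds into it. Writing `A q ≺ B q` for the images of
`(q, false)` and `(q, true)`, we get `B p ⊆ A q` for `p < q`; points `x q ∈ B q \ A q` are distinct,
and the open set `⋃_{q < r} B q` meets `{x q}` exactly in `{x q : q < r}`.
-/

open Cardinal

/-- `Z` is in the ideal `I = {Z : |{U ∩ Z : U ∈ T}| < μ}`. -/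
def InSmallIdeal {Ω : Type u} (T : Set (Set Ω)) (μ : Cardinal.{u}) (Z : Set Ω) : Prop :=
  #{V : Set Ω // ∃ U ∈ T, V = U ∩ Z} < μ

instance Flag.denselyOrdered {α : Type*} [PartialOrder α] [DenselyOrdered α] (s : Flag α) :
    DenselyOrdered s := by
  classical
  refine ⟨fun a b hab => ?_⟩
  by_contra! hgap
  obtain ⟨c, hac, hcb⟩ := exists_between (α := α) hab
  have hc : c ∈ s := Flag.mem_iff_forall_le_or_ge.2 fun d hd => by
    rcases le_or_gt ⟨d, hd⟩ a with hda | had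
    · exact Or.inr (le_of_lt (lt_of_le_of_lt hda hac))
    · exact Or.inl (hcb.le.trans (hgap ⟨d, hd⟩ had))
  exact (hgap ⟨c, hc⟩ hac).not_gt hcb

theorem exists_strictMono_of_lt {α β : Type*} [LinearOrder α] [Countable α] [PartialOrder β]
    [DenselyOrdered β] {a b : β} (hab : a < b) : ∃ f : α → β, StrictMono f := by
  classical
  obtain ⟨s, ha, hb⟩ := Flag.exists_mem_mem hab.le
  have : Nontrivial s := ⟨⟨⟨a, ha⟩, ⟨b, hb⟩, fun h => hab.ne (congrArg Subtype.val h)⟩⟩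
  obtain ⟨e⟩ := Order.embedding_from_countable_to_dense α s
  exact ⟨Subtype.val ∘ e, (Subtype.strictMono_coe _).comp e.strictMono⟩

theorem exists_strictMono_of_rel {β : Type*} (r : β → β → Prop) [IsStrictOrder β r]
    (hdense : ∀ a b, r a b → ∃ c, r a c ∧ r c b) {a b : β} (hab : r a b)
    (α : Type*) [LinearOrder α] [Countable α] : ∃ f : α → β, ∀ x y, x < y → r (f x) (f y) := by
  let := partialOrderOfSO r
  have : DenselyOrdered β := ⟨hdense⟩
  exact exists_strictMono_of_lt hab

section PointsAlongChain

variable {ι Ω : Type*} [LinearOrder ι] {A B : ι → Set Ω} {x : ι → Ω}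

theorem injective_of_mem_diff (hAB : ∀ p q, p < q → B p ⊆ A q) (hx : ∀ q, x q ∈ B q \ A q) :
    Function.Injective x :=
  .of_lt_imp_ne fun p q hpq hxpq => (hx q).2 (hxpq ▸ hAB p q hpq (hx p).1)

theorem biUnion_inter_range_eq_image (hAB : ∀ p q, p < q → B p ⊆ A q)
    (hx : ∀ q, x q ∈ B q \ A q) {D : Set ι} (hD : IsLowerSet D) :
    (⋃ q ∈ D, B q) ∩ Set.range x = x '' D := by
  ext z
  simp only [Set.mem_inter_iff, Set.mem_iUnion, Set.mem_range, Set.mem_image, exists_prop]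
  constructor
  · rintro ⟨⟨p, hp, hqp⟩, q, rfl⟩
    refine ⟨q, ?_, rfl⟩
    by_contra hq
    have hpq : p < q := lt_of_not_ge fun hqp' => hq (hD hqp' hp)
    exact (hx q).2 (hAB p q hpq hqp)
  · rintro ⟨q, hq, rfl⟩
    exact ⟨⟨q, hq, (hx q).1⟩, q, rfl⟩

end PointsAlongChain

section LargeGap

variable {Ω : Type u} {T : Set (Set Ω)} {μ : Cardinal.{u}}

/-- The relation `U ≺ V` of the paper's set `P`: `(U, V) ∈ P`. -/
def LargeGap (T : Set (Set Ω)) (μ : Cardinal.{u}) (U V : Set Ω) : Prop :=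
  U ∈ T ∧ V ∈ T ∧ U ⊆ V ∧ ¬ InSmallIdeal T μ (V \ U)

theorem InSmallIdeal.mono {Z Z' : Set Ω} (h : Z ⊆ Z') (hZ' : InSmallIdeal T μ Z') :
    InSmallIdeal T μ Z := by
  have htraces : {V | ∃ U ∈ T, V = U ∩ Z} = (· ∩ Z) '' {V | ∃ U ∈ T, V = U ∩ Z'} := by
    ext V
    simp only [Set.mem_ofPred_eq, Set.mem_image]
    constructor
    · rintro ⟨U, hU, rfl⟩
      exact ⟨U ∩ Z', ⟨U, hU, rfl⟩, by rw [Set.inter_assoc, Set.inter_eq_right.2 h]⟩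
    · rintro ⟨_, ⟨U, hU, rfl⟩, rfl⟩
      exact ⟨U, hU, by rw [Set.inter_assoc, Set.inter_eq_right.2 h]⟩
  exact (htraces ▸ mk_image_le).trans_lt hZ'

theorem inSmallIdeal_empty (hμ : 1 < μ) : InSmallIdeal T μ ∅ := by
  refine lt_of_le_of_lt (mk_le_one_iff_set_subsingleton.2 ?_) hμ
  rintro _ ⟨U₁, -, rfl⟩ _ ⟨U₂, -, rfl⟩
  simp

theorem nonempty_of_not_inSmallIdeal (hμ : 1 < μ) {Z : Set Ω} (hZ : ¬ InSmallIdeal T μ Z) :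
    Z.Nonempty :=
  Set.nonempty_iff_ne_empty.2 fun h => hZ (h ▸ inSmallIdeal_empty hμ)

theorem isStrictOrder_largeGap (hμ : 1 < μ) : IsStrictOrder (Set Ω) (LargeGap T μ) where
  irrefl _ h := h.2.2.2 (Set.sdiff_self ▸ inSmallIdeal_empty hμ)
  trans _ _ _ := fun ⟨hU, _, hUV, hVU⟩ ⟨_, hW, hVW, _⟩ =>
    ⟨hU, hW, hUV.trans hVW, fun hWU => hVU (hWU.mono (Set.sdiff_subset_sdiff_left hVW))⟩

end LargeGap

theorem stmt_16_general {Ω : Type u} (T : Set (Set Ω)) (μ : Cardinal.{u})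
    (hunc : ℵ₀ < μ)
    (hempty : ∅ ∈ T) (huniv : Set.univ ∈ T) (hUnion : ∀ S ⊆ T, ⋃₀ S ∈ T)
    (hproper : ¬ InSmallIdeal T μ Set.univ)
    (hdense : ∀ U₀ U₁, U₀ ∈ T → U₁ ∈ T → U₀ ⊆ U₁ → ¬ InSmallIdeal T μ (U₁ \ U₀) →
      ∃ W ∈ T, U₀ ⊆ W ∧ W ⊆ U₁ ∧
        ¬ InSmallIdeal T μ (W \ U₀) ∧ ¬ InSmallIdeal T μ (U₁ \ W)) :
    ∃ x : ℚ → Ω, Function.Injective x ∧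
      ∀ r : ℝ, ∃ U ∈ T, U ∩ Set.range x = x '' {q : ℚ | (q : ℝ) < r} := by
  have hμ : 1 < μ := one_lt_aleph0.trans hunc
  have := isStrictOrder_largeGap (T := T) hμ
  have : Countable (Lex (ℚ × Bool)) := inferInstanceAs (Countable (ℚ × Bool))
  obtain ⟨f, hf⟩ := exists_strictMono_of_rel (LargeGap T μ)
    (fun U₀ U₁ ⟨h₀, h₁, h₀₁, hI⟩ =>
      let ⟨W, hW, h₀W, hW₁, hI₀, hI₁⟩ := hdense U₀ U₁ h₀ h₁ h₀₁ hI
      ⟨W, ⟨h₀, hW, h₀W, hI₀⟩, ⟨hW, h₁, hW₁, hI₁⟩⟩)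
    (⟨hempty, huniv, Set.empty_subset _, by rwa [Set.sdiff_empty]⟩ : LargeGap T μ ∅ Set.univ)
    (Lex (ℚ × Bool))
  set A : ℚ → Set Ω := fun q => f (toLex (q, false))
  set B : ℚ → Set Ω := fun q => f (toLex (q, true))
  have hAB : ∀ p q, p < q → B p ⊆ A q := fun p q hpq =>
    (hf _ _ (Prod.Lex.toLex_lt_toLex.2 (Or.inl hpq))).2.2.1
  have hBA : ∀ q, LargeGap T μ (A q) (B q) := fun q =>
    hf _ _ (Prod.Lex.toLex_lt_toLex.2 (Or.inr ⟨rfl, Bool.false_lt_true⟩))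
  choose x hx using fun q => nonempty_of_not_inSmallIdeal hμ (hBA q).2.2.2
  refine ⟨x, injective_of_mem_diff hAB hx, fun r => ⟨⋃ q ∈ {q : ℚ | (q : ℝ) < r}, B q, ?_,
    biUnion_inter_range_eq_image hAB hx ((isLowerSet_Iio r).preimage Rat.cast_mono)⟩⟩
  rw [← Set.sUnion_image]
  exact hUnion _ (Set.image_subset_iff.2 fun q _ => (hBA q).2.1)

/-- let `μ` be regular uncountable, `T` a topology on `Ω` and
`I = {Z : |{U ∩ Z : U ∈ T}| < μ}` a proper ideal. Let
`P = {(U,V) : U ⊆ V open, V \ U ∉ I}` and suppose for every `(U₀,U₁) ∈ P` there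
is `W` open with `(U₀,W), (W,U₁) ∈ P`. Then there are distinct points
`x q ∈ Ω` for `q ∈ ℚ` such that for every real `r` some open `U` satisfies
`U ∩ {x q : q ∈ ℚ} = {x q : (q : ℝ) < r}`. -/
theorem stmt_16 {Ω : Type u} (T : Set (Set Ω)) (μ : Cardinal.{u})
    (hreg : μ.IsRegular) (hunc : ℵ₀ < μ)
    (hempty : ∅ ∈ T) (huniv : Set.univ ∈ T) (hUnion : ∀ S ⊆ T, ⋃₀ S ∈ T)
    (hproper : ¬ InSmallIdeal T μ Set.univ)
    (hdense : ∀ U₀ U₁, U₀ ∈ T → U₁ ∈ T → U₀ ⊆ U₁ → ¬ InSmallIdeal T μ (U₁ \ U₀) →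
      ∃ W ∈ T, U₀ ⊆ W ∧ W ⊆ U₁ ∧
        ¬ InSmallIdeal T μ (W \ U₀) ∧ ¬ InSmallIdeal T μ (U₁ \ W)) :
    ∃ x : ℚ → Ω, Function.Injective x ∧
      ∀ r : ℝ, ∃ U ∈ T, U ∩ Set.range x = x '' {q : ℚ | (q : ℝ) < r} :=
  stmt_16_general T μ hunc hempty huniv hUnion hproper hdense
end

section
/- For each n, under the hypotheses 2^{λ_n} < λ ≤ μ, λ strong limit of cofinality ℵ₀ with ℵ₀ ≤ μ_n < λ, and cov(μ, λ_n⁺, λ_n⁺, μ_n⁺) ≤ μ, there is a family R of cardinality ≤ μ of partial functions from λ_n to μ such that: for every total function f : λ_n → μ there is a partition ⟨r_ζ : ζ < μ_n⟩ of λ_n into pairwise disjoint sets with union λ_n such that f ↾ r_ζ ∈ R for every ζ < μ_n. -/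
open Cardinal

/-- `covC μ lam kap` is Shelah's `cov(μ, lam⁺, lam⁺, kap)`. -/
noncomputable def covC (μ lam kap : Cardinal.{u}) : Cardinal.{u} :=
  sInf { c | ∃ P : Set (Set μ.ord.ToType), #P = c ∧ (∀ a ∈ P, #a ≤ lam) ∧
    ∀ a : Set μ.ord.ToType, #a ≤ lam → ∃ Q ⊆ P, #Q < kap ∧ a ⊆ ⋃₀ Q }

/-!
Take a family `P` of at most `μ` sets of size `≤ λₙ` witnessing the covering number, and let `R`
be the set of partial functions `λₙ → μ` whose values all lie in a single member of `P ∪ {∅}`.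
There are at most `μ · (λₙ + 1) ^ λₙ = μ` of them, since `(λₙ + 1) ^ λₙ` is finite or equals
`2 ^ λₙ < λ ≤ μ`. Given `f`, cover its range by `⟨a ζ : ζ < μₙ⟩ ⊆ P ∪ {∅}` and send each `i` to the least `ζ` with `f i ∈ a ζ`: the fibres
partition `λₙ`, and `f` restricted to the `ζ`-th fibre takes values in `a ζ`.
-/

namespace Set

variable {α J : Type*}

/-- The transfinite analogue of `disjointed`. -/
def disjointedLT [LinearOrder J] (a : J → Set α) (ζ : J) : Set α :=
  a ζ \ ⋃ ξ < ζ, a ξ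

theorem pairwise_disjoint_disjointedLT [LinearOrder J] (a : J → Set α) :
    Pairwise (Function.onFun Disjoint (disjointedLT a)) := by
  suffices ∀ ζ ξ, ζ < ξ → Disjoint (disjointedLT a ζ) (disjointedLT a ξ) from
    fun ζ ξ hne => hne.lt_or_gt.elim (this ζ ξ) fun hgt => (this ξ ζ hgt).symm
  intro ζ ξ hlt
  refine disjoint_left.2 fun x hxζ hxξ => hxξ.2 ?_
  exact mem_biUnion hlt hxζ.1

theorem iUnion_disjointedLT [LinearOrder J] [WellFoundedLT J] (a : J → Set α) :
    ⋃ ζ, disjointedLT a ζ = ⋃ ζ, a ζ := by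
  refine (iUnion_mono fun ζ => sdiff_subset).antisymm fun x hx => ?_
  have hne : {ζ | x ∈ a ζ}.Nonempty := mem_iUnion.1 hx
  refine mem_iUnion.2 ⟨wellFounded_lt.min _ hne, wellFounded_lt.min_mem _ hne, ?_⟩
  simp only [mem_iUnion, not_exists]
  exact fun ξ hlt hxξ => wellFounded_lt.not_lt_min {ζ | x ∈ a ζ} hxξ hlt

end Set

open Set

section PartialFunctions

variable {ι α : Type u}

variable (ι) in
def partialFunsInto (P : Set (Set α)) : Set (ι → Option α) :=
  {g | ∃ a ∈ P, ∀ i x, g i = some x → x ∈ a}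

theorem mk_partialFunsInto_le {P : Set (Set α)} {κ : Cardinal.{u}} (hP : ∀ a ∈ P, #a ≤ κ) :
    #(partialFunsInto ι P) ≤ #P * (κ + 1) ^ #ι := by
  let F : (Σ a : P, ι → Option a.1) → ι → Option α := fun p i => (p.2 i).map Subtype.val
  have hsub : partialFunsInto ι P ⊆ range F := by
    rintro g ⟨a, ha, hga⟩
    refine ⟨⟨⟨a, ha⟩, fun i => (g i).pmap (fun x hx => ⟨x, hx⟩) (hga i)⟩, funext fun i => ?_⟩
    simp only [F, Option.map_pmap, Option.pmap_eq_map, Option.map_id']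
  calc #(partialFunsInto ι P) ≤ #(Σ a : P, ι → Option a.1) :=
        (mk_le_mk_of_subset hsub).trans mk_range_le
    _ = sum fun a : P => (#a.1 + 1) ^ #ι := by simp only [mk_sigma, ← power_def, mk_option]
    _ ≤ sum fun _ : P => (κ + 1) ^ #ι :=
        sum_le_sum _ _ fun a => power_le_power_right (add_le_add_left (hP a.1 a.2) 1)
    _ = #P * (κ + 1) ^ #ι := sum_const' _ _

open Classical in
theorem restrict_mem_partialFunsInto {P : Set (Set α)} {a : Set α} (ha : a ∈ P) {f : ι → α}
    {s : Set ι} (hs : s ⊆ f ⁻¹' a) :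
    (fun i => if i ∈ s then some (f i) else none) ∈ partialFunsInto ι P := by
  refine ⟨a, ha, fun i x hx => ?_⟩
  dsimp only at hx
  split_ifs at hx with hi
  exact Option.some_inj.1 hx ▸ hs hi

end PartialFunctions

theorem exists_indexing_of_mk_le {α J : Type u} {Q : Set (Set α)} (hQ : #Q ≤ #J) :
    ∃ a : J → Set α, (∀ ζ, a ζ ∈ insert ∅ Q) ∧ ⋃₀ Q ⊆ ⋃ ζ, a ζ := by
  obtain ⟨j⟩ := hQ
  refine ⟨Function.extend j Subtype.val fun _ => ∅, fun ζ => ?_, fun x ⟨q, hq, hxq⟩ => ?_⟩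
  · by_cases h : ∃ q, j q = ζ
    · obtain ⟨q, rfl⟩ := h
      exact Or.inr (j.injective.extend_apply _ _ q ▸ q.2)
    · exact Or.inl (Function.extend_apply' _ _ _ h)
  · exact mem_iUnion.2 ⟨j ⟨q, hq⟩, (j.injective.extend_apply _ _ _).symm ▸ hxq⟩

theorem exists_cover_of_covC_le {μ lam kap c : Cardinal.{u}} (hkap : 1 < kap)
    (h : covC μ lam kap ≤ c) :
    ∃ P : Set (Set μ.ord.ToType), #P ≤ c ∧ (∀ a ∈ P, #a ≤ lam) ∧
      ∀ a : Set μ.ord.ToType, #a ≤ lam → ∃ Q ⊆ P, #Q < kap ∧ a ⊆ ⋃₀ Q := by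
  have hne : {c | ∃ P : Set (Set μ.ord.ToType), #P = c ∧ (∀ a ∈ P, #a ≤ lam) ∧
      ∀ a : Set μ.ord.ToType, #a ≤ lam → ∃ Q ⊆ P, #Q < kap ∧ a ⊆ ⋃₀ Q}.Nonempty :=
    ⟨_, {a | #a ≤ lam}, rfl, fun a ha => ha,
      fun a ha => ⟨{a}, singleton_subset_iff.2 ha, by rwa [mk_singleton], by simp⟩⟩
  obtain ⟨P, hPc, hP⟩ := csInf_mem hne
  exact ⟨P, hPc ▸ h, hP⟩

theorem Cardinal.add_one_power_self_le {κ μ : Cardinal} (hμ : ℵ₀ ≤ μ) (h : 2 ^ κ ≤ μ) :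
    (κ + 1) ^ κ ≤ μ := by
  rcases lt_or_ge κ ℵ₀ with hκ | hκ
  · exact (power_lt_aleph0 (add_lt_aleph0 hκ one_lt_aleph0) hκ).le.trans hμ
  · rwa [add_one_eq hκ, power_self_eq hκ]

open Classical in
theorem stmt_19_general (lamn mun lam μ : Cardinal.{u})
    (h1 : 2 ^ lamn < lam) (h2 : lam ≤ μ)
    (h4 : lam.IsStrongLimit)
    (h6 : ℵ₀ ≤ mun)
    (h8 : covC μ lamn (Order.succ mun) ≤ μ) :
    ∃ R : Set (lamn.ord.ToType → Option μ.ord.ToType), #R ≤ μ ∧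
      ∀ f : lamn.ord.ToType → μ.ord.ToType,
        ∃ r : mun.ord.ToType → Set lamn.ord.ToType,
          (∀ ζ ξ, ζ ≠ ξ → Disjoint (r ζ) (r ξ)) ∧
          (⋃ ζ, r ζ) = Set.univ ∧
          ∀ ζ, (fun i => if i ∈ r ζ then some (f i) else none) ∈ R := by
  have hμ : ℵ₀ ≤ μ := h4.aleph0_le.trans h2
  obtain ⟨P, hPμ, hPsmall, hPcov⟩ := exists_cover_of_covC_le
    (one_lt_aleph0.trans_le (h6.trans (Order.le_succ mun))) h8
  have hP₀small : ∀ a ∈ insert ∅ P, #a ≤ lamn := by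
    rintro a (rfl | ha)
    exacts [by simp, hPsmall a ha]
  refine ⟨partialFunsInto _ (insert ∅ P), ?_, fun f => ?_⟩
  · calc _ ≤ #(insert ∅ P : Set _) * (lamn + 1) ^ lamn := by
          simpa using mk_partialFunsInto_le (ι := lamn.ord.ToType) hP₀small
      _ ≤ (μ + 1) * μ := mul_le_mul' (mk_insert_le.trans (add_le_add_left hPμ 1))
          (add_one_power_self_le hμ (h1.le.trans h2))
      _ = μ := by rw [add_one_eq hμ, mul_eq_self hμ]
  · obtain ⟨Q, hQP, hQmun, hfQ⟩ := hPcov (range f) (by simpa using mk_range_le (f := f))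
    obtain ⟨a, haQ, hQa⟩ := exists_indexing_of_mk_le (J := mun.ord.ToType)
      (by simpa [Order.lt_succ_iff] using hQmun)
    refine ⟨fun ζ => f ⁻¹' disjointedLT a ζ, fun ζ ξ hne =>
      (pairwise_disjoint_disjointedLT a hne).preimage f, ?_, fun ζ => ?_⟩
    · rw [← preimage_iUnion, iUnion_disjointedLT, ← univ_subset_iff]
      exact fun i _ => hQa (hfQ (mem_range_self i))
    · exact restrict_mem_partialFunsInto (insert_subset_insert hQP (haQ ζ))
        (preimage_mono sdiff_subset)

open Classical in
/-- Observation 3: under `2 ^ lamn < lam ≤ μ < 2 ^ lam`, `lam`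
strong limit of cofinality `ℵ₀`, `ℵ₀ ≤ mun < lam` and
`cov(μ, lamn⁺, lamn⁺, mun⁺) ≤ μ`, there is a family `R` of at most `μ` partial
functions from `lamn` to `μ` (encoded as `Option`-valued functions) such that
every total `f : lamn → μ` admits a partition `⟨r ζ : ζ < mun⟩` of `lamn` with
`f ↾ r ζ ∈ R` for every `ζ`. -/
theorem stmt_19 (lamn mun lam μ : Cardinal.{u})
    (h1 : 2 ^ lamn < lam) (h2 : lam ≤ μ) (h3 : μ < 2 ^ lam)
    (h4 : lam.IsStrongLimit) (h5 : lam.ord.cof = ℵ₀)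
    (h6 : ℵ₀ ≤ mun) (h7 : mun < lam)
    (h8 : covC μ lamn (Order.succ mun) ≤ μ) :
    ∃ R : Set (lamn.ord.ToType → Option μ.ord.ToType), #R ≤ μ ∧
      ∀ f : lamn.ord.ToType → μ.ord.ToType,
        ∃ r : mun.ord.ToType → Set lamn.ord.ToType,
          (∀ ζ ξ, ζ ≠ ξ → Disjoint (r ζ) (r ξ)) ∧
          (⋃ ζ, r ζ) = Set.univ ∧
          ∀ ζ, (fun i => if i ∈ r ζ then some (f i) else none) ∈ R :=
  stmt_19_general lamn mun lam μ h1 h2 h4 h6 h8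
end
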